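/- arXiv:2411.06551 — 4 statements merged into one kernel-verified Lean document; each statement's English description precedes it below -/
import Mathlib

section
/- Let Γ, Δ > 0 and l > 0, with N > N* (so the quadratic P(A) = (lN+1)A² + (Γ+Δ−N)A + ΓΔ has two distinct positive roots A₁ < A₂). Then both roots satisfy 0 < A₁ < A₂ < 1/l. -/
/-!
By Vieta, `P(A) = (lN + 1)(A - A₁)(A - A₂)`, so a point where `P` is positive lies left of `A₁`
if it lies left of the midpoint `(A₁ + A₂)/2 = (N - Γ - Δ)/(2(lN + 1))`, and right of `A₂` if it
lies right of it. Since `N > Γ + Δ`, the midpoint lies in `(0, 1/(2l))`, while `P(0) = ΓΔ > 0`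
and `P(1/l) = (1 + lΓ)(1 + lΔ)/l² > 0`.
-/

section Quadratic

variable {K : Type*} [Field K] {a b c r s : K}

theorem quadratic_root_sum (hrs : r ≠ s) (hr : a * r ^ 2 + b * r + c = 0)
    (hs : a * s ^ 2 + b * s + c = 0) : a * (r + s) = -b := by
  have h : (r - s) * (a * (r + s) + b) = 0 := by linear_combination hr - hs
  linear_combination (mul_eq_zero.mp h).resolve_left (sub_ne_zero.mpr hrs)

theorem quadratic_eq_mul_sub_mul_sub (hrs : r ≠ s) (hr : a * r ^ 2 + b * r + c = 0)
    (hs : a * s ^ 2 + b * s + c = 0) (x : K) :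
    a * x ^ 2 + b * x + c = a * (x - r) * (x - s) := by
  linear_combination (x - r) * quadratic_root_sum hrs hr hs + hr

variable [LinearOrder K] [IsStrictOrderedRing K] {x : K}

theorem lt_left_root_of_quadratic_pos (ha : 0 < a) (hrs : r < s)
    (hr : a * r ^ 2 + b * r + c = 0) (hs : a * s ^ 2 + b * s + c = 0)
    (hx : 0 < a * x ^ 2 + b * x + c) (hmid : 2 * x < r + s) : x < r := by
  rw [quadratic_eq_mul_sub_mul_sub hrs.ne hr hs, mul_assoc] at hx
  have hxs : x - s < 0 := by linarith
  linarith [neg_of_mul_pos_left (pos_of_mul_pos_right hx ha.le) hxs.le]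

theorem right_root_lt_of_quadratic_pos (ha : 0 < a) (hrs : r < s)
    (hr : a * r ^ 2 + b * r + c = 0) (hs : a * s ^ 2 + b * s + c = 0)
    (hx : 0 < a * x ^ 2 + b * x + c) (hmid : r + s < 2 * x) : s < x := by
  rw [quadratic_eq_mul_sub_mul_sub hrs.ne hr hs, mul_assoc] at hx
  have hxr : 0 < x - r := by linarith
  linarith [pos_of_mul_pos_right (pos_of_mul_pos_right hx ha.le) hxr.le]

end Quadratic

theorem stmt5 (Γ Δ l N A₁ A₂ : ℝ) (hΓ : 0 < Γ) (hΔ : 0 < Δ) (hl : 0 < l)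
    (hNstar : Γ + Δ + 2 * l * Γ * Δ +
      2 * Real.sqrt (Γ * Δ + l * (Γ + Δ) * Γ * Δ + l ^ 2 * Γ ^ 2 * Δ ^ 2) < N)
    (h1 : (l * N + 1) * A₁ ^ 2 + (Γ + Δ - N) * A₁ + Γ * Δ = 0)
    (h2 : (l * N + 1) * A₂ ^ 2 + (Γ + Δ - N) * A₂ + Γ * Δ = 0)
    (h12 : A₁ < A₂) :
    0 < A₁ ∧ A₂ < 1 / l := by
  have hN : Γ + Δ < N := by
    nlinarith [Real.sqrt_nonneg (Γ * Δ + l * (Γ + Δ) * Γ * Δ + l ^ 2 * Γ ^ 2 * Δ ^ 2),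
      mul_pos (mul_pos hl hΓ) hΔ]
  have ha : 0 < l * N + 1 := by nlinarith
  have hsum : (l * N + 1) * (A₁ + A₂) = N - Γ - Δ := by
    linear_combination quadratic_root_sum h12.ne h1 h2
  constructor
  · refine lt_left_root_of_quadratic_pos ha h12 h1 h2 (by simp [hΓ, hΔ]) ?_
    nlinarith
  · refine right_root_lt_of_quadratic_pos ha h12 h1 h2 ?_ ?_
    · have hP : (l * N + 1) * (1 / l) ^ 2 + (Γ + Δ - N) * (1 / l) + Γ * Δ
          = (1 + l * Γ) * (1 + l * Δ) / l ^ 2 := by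
        field_simp
        ring
      rw [hP]
      positivity
    · rw [mul_one_div, lt_div_iff₀ hl]
      nlinarith
end

section
/- With L as above (all parameters positive, 0 < ω < 1, 0 < p, q ≤ 1) and R < 1, the matrix L is invertible, and the unique solution y = (B, Q_H, Q_V, R_H, R_V) of L·y + (f,0,0,0,0)ᵀ = 0 for f > 0 satisfies a_H·R_H + a_V·R_V = f·R/(1−R). -/
/-!
`L` is the generator of a linear compartment flow with the two cycles `B → Q_H → R_H → B` and
`B → Q_V → R_V → B`; `R` is the sum over both cycles of the product of the branching ratios
along the cycle. Back-substituting the `Q` and `R` rows of a stationary solution gives the return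
flux `S = a_H R_H + a_V R_V = R · T_B · B`, while the `B` row says `T_B · B = S + f`; hence
`S = R (S + f)`. The same elimination, done on the determinant, gives
`det L = -T_B T_{Q_H} T_{Q_V} T_{R_H} T_{R_V} (1 - R)`.
-/

section TwoCycle

variable (tB tQH tQV tRH tRV bH bV cH cV aH aV : ℝ)

def twoCycleMatrix : Matrix (Fin 5) (Fin 5) ℝ :=
  !![-tB, 0, 0, aH, aV;
    bH, -tQH, 0, 0, 0;
    bV, 0, -tQV, 0, 0;
    0, cH, 0, -tRH, 0;
    0, 0, cV, 0, -tRV]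

noncomputable def cycleGain : ℝ :=
  (aH * cH * bH / (tRH * tQH) + aV * cV * bV / (tRV * tQV)) / tB

theorem det_twoCycleMatrix :
    (twoCycleMatrix tB tQH tQV tRH tRV bH bV cH cV aH aV).det =
      -(tB * tQH * tQV * tRH * tRV) + aH * cH * bH * tQV * tRV + aV * cV * bV * tQH * tRH := by
  simp [twoCycleMatrix, Matrix.det_succ_row_zero, Fin.sum_univ_succ, Fin.succAbove]
  ring

variable {tB tQH tQV tRH tRV bH bV cH cV aH aV}

theorem det_twoCycleMatrix_eq (hB : tB ≠ 0) (hQH : tQH ≠ 0) (hQV : tQV ≠ 0) (hRH : tRH ≠ 0)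
    (hRV : tRV ≠ 0) :
    (twoCycleMatrix tB tQH tQV tRH tRV bH bV cH cV aH aV).det =
      -(tB * tQH * tQV * tRH * tRV) * (1 - cycleGain tB tQH tQV tRH tRV bH bV cH cV aH aV) := by
  rw [det_twoCycleMatrix, cycleGain]
  field_simp
  ring

theorem isUnit_det_twoCycleMatrix (hB : tB ≠ 0) (hQH : tQH ≠ 0) (hQV : tQV ≠ 0)
    (hRH : tRH ≠ 0) (hRV : tRV ≠ 0)
    (hgain : cycleGain tB tQH tQV tRH tRV bH bV cH cV aH aV ≠ 1) :
    IsUnit (twoCycleMatrix tB tQH tQV tRH tRV bH bV cH cV aH aV).det := by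
  rw [isUnit_iff_ne_zero, det_twoCycleMatrix_eq hB hQH hQV hRH hRV]
  exact mul_ne_zero (neg_ne_zero.2 (by simp [*])) (sub_ne_zero.2 hgain.symm)

theorem returnFlux_eq_cycleGain_mul (hB : tB ≠ 0) (hQH : tQH ≠ 0) (hQV : tQV ≠ 0)
    (hRH : tRH ≠ 0) (hRV : tRV ≠ 0) (f : ℝ) (y : Fin 5 → ℝ)
    (hy : (twoCycleMatrix tB tQH tQV tRH tRV bH bV cH cV aH aV).mulVec y + ![f, 0, 0, 0, 0] = 0) :
    aH * y 3 + aV * y 4 =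
      cycleGain tB tQH tQV tRH tRV bH bV cH cV aH aV * (aH * y 3 + aV * y 4 + f) := by
  have h0 := congrFun hy 0
  have h1 := congrFun hy 1
  have h2 := congrFun hy 2
  have h3 := congrFun hy 3
  have h4 := congrFun hy 4
  simp only [twoCycleMatrix, Matrix.cons_mulVec, Matrix.empty_mulVec, dotProduct,
    Fin.sum_univ_five, Matrix.cons_val, Pi.add_apply, Pi.zero_apply, zero_mul, add_zero, zero_add,
    neg_mul] at h0 h1 h2 h3 h4
  have hB0 : tB * y 0 = aH * y 3 + aV * y 4 + f := by linarith
  have hQH1 : y 1 = bH * y 0 / tQH := by field_simp; linarith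
  have hQV2 : y 2 = bV * y 0 / tQV := by field_simp; linarith
  have hRH3 : y 3 = cH * y 1 / tRH := by field_simp; linarith
  have hRV4 : y 4 = cV * y 2 / tRV := by field_simp; linarith
  rw [← hB0, hRH3, hRV4, hQH1, hQV2, cycleGain]
  field_simp

theorem returnFlux_eq (hB : tB ≠ 0) (hQH : tQH ≠ 0) (hQV : tQV ≠ 0)
    (hRH : tRH ≠ 0) (hRV : tRV ≠ 0)
    (hgain : cycleGain tB tQH tQV tRH tRV bH bV cH cV aH aV ≠ 1) (f : ℝ) (y : Fin 5 → ℝ)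
    (hy : (twoCycleMatrix tB tQH tQV tRH tRV bH bV cH cV aH aV).mulVec y + ![f, 0, 0, 0, 0] = 0) :
    aH * y 3 + aV * y 4 =
      f * cycleGain tB tQH tQV tRH tRV bH bV cH cV aH aV /
        (1 - cycleGain tB tQH tQV tRH tRV bH bV cH cV aH aV) := by
  rw [eq_div_iff (sub_ne_zero.2 hgain.symm)]
  linear_combination returnFlux_eq_cycleGain_mul hB hQH hQV hRH hRV f y hy

end TwoCycle

theorem stmt10_general (b μB ω p q aH aV σH σV μQH μQV μRH μRV f : ℝ)
    (hb : 0 < b) (hμB : 0 < μB) (haH : 0 < aH) (haV : 0 < aV)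
    (hσH : 0 < σH) (hσV : 0 < σV) (hμQH : 0 < μQH) (hμQV : 0 < μQV)
    (hμRH : 0 < μRH) (hμRV : 0 < μRV)
    (L : Matrix (Fin 5) (Fin 5) ℝ)
    (hL : L = Matrix.of !![-(b + μB), 0, 0, aH, aV;
        b * ω, -(μQH + σH), 0, 0, 0;
        b * (1 - ω), 0, -(μQV + σV), 0, 0;
        0, p * σH, 0, -(μRH + aH), 0;
        0, 0, q * σV, 0, -(μRV + aV)])
    (R : ℝ)
    (hR : R = b / (b + μB) *
        ((1 - ω) * q * aV * σV / ((μRV + aV) * (μQV + σV)) +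
          ω * p * aH * σH / ((μRH + aH) * (μQH + σH))))
    (hR1 : R < 1) :
    IsUnit L.det ∧
      ∀ y : Fin 5 → ℝ, L.mulVec y + ![f, 0, 0, 0, 0] = 0 →
        aH * y 3 + aV * y 4 = f * R / (1 - R) := by
  have hB : b + μB ≠ 0 := by positivity
  have hQH : μQH + σH ≠ 0 := by positivity
  have hQV : μQV + σV ≠ 0 := by positivity
  have hRH : μRH + aH ≠ 0 := by positivity
  have hRV : μRV + aV ≠ 0 := by positivity
  have hL' : L = twoCycleMatrix (b + μB) (μQH + σH) (μQV + σV) (μRH + aH) (μRV + aV)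
      (b * ω) (b * (1 - ω)) (p * σH) (q * σV) aH aV := hL
  have hR' : R = cycleGain (b + μB) (μQH + σH) (μQV + σV) (μRH + aH) (μRV + aV)
      (b * ω) (b * (1 - ω)) (p * σH) (q * σV) aH aV := by
    rw [hR, cycleGain]
    ring
  subst hL' hR'
  exact ⟨isUnit_det_twoCycleMatrix hB hQH hQV hRH hRV hR1.ne,
    returnFlux_eq hB hQH hQV hRH hRV hR1.ne f⟩

theorem stmt10 (b μB ω p q aH aV σH σV μQH μQV μRH μRV f : ℝ)
    (hb : 0 < b) (hμB : 0 < μB) (haH : 0 < aH) (haV : 0 < aV)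
    (hσH : 0 < σH) (hσV : 0 < σV) (hμQH : 0 < μQH) (hμQV : 0 < μQV)
    (hμRH : 0 < μRH) (hμRV : 0 < μRV)
    (hω : 0 < ω) (hω1 : ω < 1) (hp0 : 0 < p) (hp : p ≤ 1) (hq0 : 0 < q) (hq : q ≤ 1)
    (hf : 0 < f)
    (L : Matrix (Fin 5) (Fin 5) ℝ)
    (hL : L = Matrix.of !![-(b + μB), 0, 0, aH, aV;
        b * ω, -(μQH + σH), 0, 0, 0;
        b * (1 - ω), 0, -(μQV + σV), 0, 0;
        0, p * σH, 0, -(μRH + aH), 0;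
        0, 0, q * σV, 0, -(μRV + aV)])
    (R : ℝ)
    (hR : R = b / (b + μB) *
        ((1 - ω) * q * aV * σV / ((μRV + aV) * (μQV + σV)) +
          ω * p * aH * σH / ((μRH + aH) * (μQH + σH))))
    (hR1 : R < 1) :
    IsUnit L.det ∧
      ∀ y : Fin 5 → ℝ, L.mulVec y + ![f, 0, 0, 0, 0] = 0 →
        aH * y 3 + aV * y 4 = f * R / (1 - R) :=
  stmt10_general b μB ω p q aH aV σH σV μQH μQV μRH μRV f hb hμB haH haV hσH hσV hμQH hμQV hμRH hμRV
    L hL R hR hR1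
end

section
/- With L as above and R < 1, the unique solution of L·y + (f,0,0,0,0)ᵀ = 0 for f > 0 is given explicitly by B = f/(T_B(1−R)), Q_H = f·bω/(T_{Q_H}T_B(1−R)), Q_V = f·b(1−ω)/(T_{Q_V}T_B(1−R)), R_H = f·bωpσ_H/(T_{R_H}T_{Q_H}T_B(1−R)), R_V = f·b(1−ω)qσ_V/(T_{R_V}T_{Q_V}T_B(1−R)); in particular all components are strictly positive. -/
/-!
The equations for `Q_H, Q_V, R_H, R_V` form a feed-forward cascade, so each of them is `y 0` times
a product of transfer ratios. Substituting into the equation for `B` leaves the scalar equation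
`T_B * y 0 = R * T_B * y 0 + f`, whence `y 0 = f / (T_B * (1 - R))`, and the other components follow;
when `R < 1` all of them are positive.
-/

namespace TwoRouteCascade

variable {tB tQH tQV tRH tRV cH cV dH dV aH aV f R : ℝ} {y : Fin 5 → ℝ}

/-- Source `B` feeds `Q_H` and `Q_V` (rates `cH`, `cV`), which feed `R_H` and `R_V` (rates `dH`, `dV`),
which feed back into `B` (rates `aH`, `aV`); the diagonal holds the total exit rates. -/
def matrix (tB tQH tQV tRH tRV cH cV dH dV aH aV : ℝ) : Matrix (Fin 5) (Fin 5) ℝ :=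
  !![-tB, 0, 0, aH, aV;
    cH, -tQH, 0, 0, 0;
    cV, 0, -tQV, 0, 0;
    0, dH, 0, -tRH, 0;
    0, 0, dV, 0, -tRV]

noncomputable def reproductionNumber (tB tQH tQV tRH tRV cH cV dH dV aH aV : ℝ) : ℝ :=
  (cH * dH * aH / (tQH * tRH) + cV * dV * aV / (tQV * tRV)) / tB

theorem mulVec_add_eq_zero_iff :
    (matrix tB tQH tQV tRH tRV cH cV dH dV aH aV).mulVec y + ![f, 0, 0, 0, 0] = 0 ↔
      tB * y 0 = aH * y 3 + aV * y 4 + f ∧ tQH * y 1 = cH * y 0 ∧ tQV * y 2 = cV * y 0 ∧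
        tRH * y 3 = dH * y 1 ∧ tRV * y 4 = dV * y 2 := by
  simp only [matrix, Matrix.cons_mulVec, Matrix.empty_mulVec, dotProduct, Fin.sum_univ_five,
    Fin.isValue, Matrix.cons_val_zero, Matrix.cons_val_one, Matrix.cons_val, Matrix.head_cons,
    Matrix.tail_cons, Matrix.cons_val_succ, Matrix.cons_val_fin_one, Matrix.add_cons,
    Matrix.empty_add_empty, funext_iff, Pi.zero_apply, Fin.forall_fin_succ, neg_mul, zero_mul,
    add_zero, zero_add, forall_const]
  constructor <;> rintro ⟨h0, h1, h2, h3, h4⟩ <;> refine ⟨?_, ?_, ?_, ?_, ?_⟩ <;> linarith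

section Solution

variable (htB : tB ≠ 0) (htQH : tQH ≠ 0) (htQV : tQV ≠ 0) (htRH : tRH ≠ 0) (htRV : tRV ≠ 0)
  (hR : R = reproductionNumber tB tQH tQV tRH tRV cH cV dH dV aH aV) (hR1 : R ≠ 1)
  (hy : (matrix tB tQH tQV tRH tRV cH cV dH dV aH aV).mulVec y + ![f, 0, 0, 0, 0] = 0)
include htB htQH htQV htRH htRV hR hR1 hy

theorem eq_of_mulVec_add_eq_zero :
    y 0 = f / (tB * (1 - R)) ∧
    y 1 = f * cH / (tQH * tB * (1 - R)) ∧
    y 2 = f * cV / (tQV * tB * (1 - R)) ∧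
    y 3 = f * (cH * dH) / (tRH * tQH * tB * (1 - R)) ∧
    y 4 = f * (cV * dV) / (tRV * tQV * tB * (1 - R)) := by
  obtain ⟨hB, hQH, hQV, hRH, hRV⟩ := mulVec_add_eq_zero_iff.mp hy
  have hy1 : y 1 = cH * y 0 / tQH := by field_simp; linarith
  have hy2 : y 2 = cV * y 0 / tQV := by field_simp; linarith
  have hy3 : y 3 = dH * y 1 / tRH := by field_simp; linarith
  have hy4 : y 4 = dV * y 2 / tRV := by field_simp; linarith
  have hloop : tB * y 0 = tB * R * y 0 + f := by
    rw [hB, hy3, hy4, hy1, hy2, hR, reproductionNumber]; field_simp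
  have hy0 : y 0 = f / (tB * (1 - R)) := by
    rw [eq_div_iff (mul_ne_zero htB (sub_ne_zero.mpr hR1.symm))]; linear_combination hloop
  refine ⟨hy0, ?_, ?_, ?_, ?_⟩
  · rw [hy1, hy0]; field_simp
  · rw [hy2, hy0]; field_simp
  · rw [hy3, hy1, hy0]; field_simp
  · rw [hy4, hy2, hy0]; field_simp

end Solution

theorem pos_of_mulVec_add_eq_zero (htB : 0 < tB) (htQH : 0 < tQH) (htQV : 0 < tQV)
    (htRH : 0 < tRH) (htRV : 0 < tRV) (hcH : 0 < cH) (hcV : 0 < cV) (hdH : 0 < dH) (hdV : 0 < dV)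
    (hf : 0 < f) (hR : R = reproductionNumber tB tQH tQV tRH tRV cH cV dH dV aH aV) (hR1 : R < 1)
    (hy : (matrix tB tQH tQV tRH tRV cH cV dH dV aH aV).mulVec y + ![f, 0, 0, 0, 0] = 0) (i : Fin 5) :
    0 < y i := by
  obtain ⟨hy0, hy1, hy2, hy3, hy4⟩ :=
    eq_of_mulVec_add_eq_zero htB.ne' htQH.ne' htQV.ne' htRH.ne' htRV.ne' hR hR1.ne hy
  have h1R : 0 < 1 - R := sub_pos.mpr hR1
  fin_cases i <;> simp only [Fin.zero_eta, Fin.mk_one, Fin.reduceFinMk, hy0, hy1, hy2, hy3, hy4] <;>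
    positivity

end TwoRouteCascade

theorem stmt11_general (b μB ω p q aH aV σH σV μQH μQV μRH μRV f : ℝ)
    (hb : 0 < b) (hμB : 0 < μB) (haH : 0 < aH) (haV : 0 < aV)
    (hσH : 0 < σH) (hσV : 0 < σV) (hμQH : 0 < μQH) (hμQV : 0 < μQV)
    (hμRH : 0 < μRH) (hμRV : 0 < μRV)
    (hω : 0 < ω) (hω1 : ω < 1) (hp0 : 0 < p) (hq0 : 0 < q)
    (hf : 0 < f)
    (L : Matrix (Fin 5) (Fin 5) ℝ)
    (hL : L = Matrix.of !![-(b + μB), 0, 0, aH, aV;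
        b * ω, -(μQH + σH), 0, 0, 0;
        b * (1 - ω), 0, -(μQV + σV), 0, 0;
        0, p * σH, 0, -(μRH + aH), 0;
        0, 0, q * σV, 0, -(μRV + aV)])
    (R : ℝ)
    (hR : R = b / (b + μB) *
        ((1 - ω) * q * aV * σV / ((μRV + aV) * (μQV + σV)) +
          ω * p * aH * σH / ((μRH + aH) * (μQH + σH))))
    (hR1 : R < 1) :
    ∀ y : Fin 5 → ℝ, L.mulVec y + ![f, 0, 0, 0, 0] = 0 →
      (y 0 = f / ((b + μB) * (1 - R)) ∧
       y 1 = f * (b * ω) / ((μQH + σH) * (b + μB) * (1 - R)) ∧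
       y 2 = f * (b * (1 - ω)) / ((μQV + σV) * (b + μB) * (1 - R)) ∧
       y 3 = f * (b * ω * p * σH) / ((μRH + aH) * (μQH + σH) * (b + μB) * (1 - R)) ∧
       y 4 = f * (b * (1 - ω) * q * σV) /
          ((μRV + aV) * (μQV + σV) * (b + μB) * (1 - R))) ∧
      ∀ i : Fin 5, 0 < y i := by
  intro y hy
  have hLy : (TwoRouteCascade.matrix (b + μB) (μQH + σH) (μQV + σV) (μRH + aH) (μRV + aV) (b * ω)
      (b * (1 - ω)) (p * σH) (q * σV) aH aV).mulVec y + ![f, 0, 0, 0, 0] = 0 := by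
    subst hL; exact hy
  have hR' : R = TwoRouteCascade.reproductionNumber (b + μB) (μQH + σH) (μQV + σV) (μRH + aH)
      (μRV + aV) (b * ω) (b * (1 - ω)) (p * σH) (q * σV) aH aV := by
    rw [hR, TwoRouteCascade.reproductionNumber]; ring
  have htB : 0 < b + μB := by positivity
  have htQH : 0 < μQH + σH := by positivity
  have htQV : 0 < μQV + σV := by positivity
  have htRH : 0 < μRH + aH := by positivity
  have htRV : 0 < μRV + aV := by positivity
  obtain ⟨hy0, hy1, hy2, hy3, hy4⟩ := TwoRouteCascade.eq_of_mulVec_add_eq_zero htB.ne' htQH.ne'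
    htQV.ne' htRH.ne' htRV.ne' hR' hR1.ne hLy
  refine ⟨⟨hy0, hy1, hy2, hy3.trans (by ring), hy4.trans (by ring)⟩, ?_⟩
  exact TwoRouteCascade.pos_of_mulVec_add_eq_zero htB htQH htQV htRH htRV (mul_pos hb hω)
    (mul_pos hb (sub_pos.mpr hω1)) (mul_pos hp0 hσH) (mul_pos hq0 hσV) hf hR' hR1 hLy

theorem stmt11 (b μB ω p q aH aV σH σV μQH μQV μRH μRV f : ℝ)
    (hb : 0 < b) (hμB : 0 < μB) (haH : 0 < aH) (haV : 0 < aV)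
    (hσH : 0 < σH) (hσV : 0 < σV) (hμQH : 0 < μQH) (hμQV : 0 < μQV)
    (hμRH : 0 < μRH) (hμRV : 0 < μRV)
    (hω : 0 < ω) (hω1 : ω < 1) (hp0 : 0 < p) (hp : p ≤ 1) (hq0 : 0 < q) (hq : q ≤ 1)
    (hf : 0 < f)
    (L : Matrix (Fin 5) (Fin 5) ℝ)
    (hL : L = Matrix.of !![-(b + μB), 0, 0, aH, aV;
        b * ω, -(μQH + σH), 0, 0, 0;
        b * (1 - ω), 0, -(μQV + σV), 0, 0;
        0, p * σH, 0, -(μRH + aH), 0;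
        0, 0, q * σV, 0, -(μRV + aV)])
    (R : ℝ)
    (hR : R = b / (b + μB) *
        ((1 - ω) * q * aV * σV / ((μRV + aV) * (μQV + σV)) +
          ω * p * aH * σH / ((μRH + aH) * (μQH + σH))))
    (hR1 : R < 1) :
    ∀ y : Fin 5 → ℝ, L.mulVec y + ![f, 0, 0, 0, 0] = 0 →
      (y 0 = f / ((b + μB) * (1 - R)) ∧
       y 1 = f * (b * ω) / ((μQH + σH) * (b + μB) * (1 - R)) ∧
       y 2 = f * (b * (1 - ω)) / ((μQV + σV) * (b + μB) * (1 - R)) ∧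
       y 3 = f * (b * ω * p * σH) / ((μRH + aH) * (μQH + σH) * (b + μB) * (1 - R)) ∧
       y 4 = f * (b * (1 - ω) * q * σV) /
          ((μRV + aV) * (μQV + σV) * (b + μB) * (1 - R))) ∧
      ∀ i : Fin 5, 0 < y i :=
  stmt11_general b μB ω p q aH aV σH σV μQH μQV μRH μRV f hb hμB haH haV hσH hσV hμQH hμQV hμRH hμRV
    hω hω1 hp0 hq0 hf L hL R hR hR1
end

section
/- Let μ, ξ, γ > 0 and let A : [0,∞) → ℝ be continuous with 0 ≤ A(t) ≤ L for all t. For ε > 0, let M_ε solve εM' = ξγA(t) − μM with M_ε(0) = M₀ ≥ 0. Then for any t₀ > 0, sup_{t ≥ t₀} |M_ε(t) − ξγA(t)/μ| → 0 as ε → 0⁺, provided A is Lipschitz on [0,∞). -/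
/-!
Write `B = ξγA/μ` and `λ = μ/ε`, so that `M' = λ (B - M)`. Freezing the target at time `t`, the
integrating factor `g s = e^{λs} (M s - B t)` has `g' s = λ e^{λs} (B s - B t)`, which the Lipschitz
bound `|B s - B t| ≤ κ (t - s)` dominates by the derivative of the barrier `κ e^{λs} (t - s + 1/λ)`.
Comparing with the barrier gives `|M t - B t| ≤ e^{-λt} |M 0 - B t| + κ/λ`: an initial layer that
is `O(ε)` uniformly on `[t₀, ∞)` (as `e^{-x} ≤ 1/x`) plus a lag `O(ε)` behind the moving target.
-/

open Real Set

theorem abs_exp_mul_sub_sub_le_of_hasDerivAt {lam K t : ℝ} {B M : ℝ → ℝ} (hlam : 0 < lam)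
    (hK : 0 ≤ K) (ht : 0 ≤ t) (hB : ∀ s ∈ Icc 0 t, |B s - B t| ≤ K * (t - s))
    (hM : ∀ s ∈ Icc 0 t, HasDerivAt M (lam * (B s - M s)) s) :
    |exp (lam * t) * (M t - B t) - (M 0 - B t)| ≤ K / lam * exp (lam * t) := by
  have hexp (s : ℝ) : HasDerivAt (fun u => exp (lam * u)) (lam * exp (lam * s)) s := by
    simpa [mul_comm] using ((hasDerivAt_id s).const_mul lam).exp
  let g (s : ℝ) : ℝ := exp (lam * s) * (M s - B t)
  let h (s : ℝ) : ℝ := K * exp (lam * s) * (t - s + lam⁻¹)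
  have hg : ∀ s ∈ Icc 0 t,
      HasDerivAt (fun u => g u - g 0) (lam * exp (lam * s) * (B s - B t)) s := fun s hs =>
    (((hexp s).mul ((hM s hs).sub_const (B t))).sub_const (g 0)).congr_deriv (by ring)
  have hh (s : ℝ) : HasDerivAt (fun u => h u - h 0) (K * lam * exp (lam * s) * (t - s)) s :=
    ((((hexp s).const_mul K).mul (((hasDerivAt_id' s).const_sub t).add_const lam⁻¹)).sub_const
      (h 0)).congr_deriv (by field_simp; ring)
  have hbound : ∀ s ∈ Ico 0 t,
      ‖lam * exp (lam * s) * (B s - B t)‖ ≤ K * lam * exp (lam * s) * (t - s) := fun s hs => by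
    rw [Real.norm_eq_abs, abs_mul, abs_of_pos (by positivity)]
    calc lam * exp (lam * s) * |B s - B t| ≤ lam * exp (lam * s) * (K * (t - s)) := by
          gcongr; exact hB s (Ico_subset_Icc_self hs)
      _ = _ := by ring
  have key := image_norm_le_of_norm_deriv_right_le_deriv_boundary
    (fun s hs => (hg s hs).continuousAt.continuousWithinAt)
    (fun s hs => (hg s (Ico_subset_Icc_self hs)).hasDerivWithinAt) (by simp) hh hbound
    (right_mem_Icc.2 ht)
  simp only [g, h, Real.norm_eq_abs, mul_zero, exp_zero, one_mul, mul_one, sub_self, sub_zero,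
    zero_add] at key
  have hcorner : 0 ≤ K * (t + lam⁻¹) := by positivity
  rw [div_mul_eq_mul_div, div_eq_mul_inv]
  linarith

theorem abs_sub_le_exp_neg_mul_mul_add_div_of_hasDerivAt {lam K t : ℝ} {B M : ℝ → ℝ}
    (hlam : 0 < lam) (hK : 0 ≤ K) (ht : 0 ≤ t) (hB : ∀ s ∈ Icc 0 t, |B s - B t| ≤ K * (t - s))
    (hM : ∀ s ∈ Icc 0 t, HasDerivAt M (lam * (B s - M s)) s) :
    |M t - B t| ≤ exp (-(lam * t)) * |M 0 - B t| + K / lam := by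
  have key := abs_exp_mul_sub_sub_le_of_hasDerivAt hlam hK ht hB hM
  have hcancel : exp (-(lam * t)) * exp (lam * t) = 1 := by rw [← exp_add, neg_add_cancel, exp_zero]
  calc |M t - B t| = exp (-(lam * t)) * |exp (lam * t) * (M t - B t)| := by
        rw [abs_mul, abs_of_pos (exp_pos _), ← mul_assoc, hcancel, one_mul]
    _ ≤ exp (-(lam * t)) * (|M 0 - B t| + K / lam * exp (lam * t)) := by
        gcongr
        linarith [abs_sub_abs_le_abs_sub (exp (lam * t) * (M t - B t)) (M 0 - B t)]
    _ = exp (-(lam * t)) * |M 0 - B t| + K / lam := by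
        rw [mul_add, mul_left_comm, hcancel, mul_one]

theorem exp_neg_mul_le_inv_mul {lam t₀ t : ℝ} (hlam : 0 < lam) (ht₀ : 0 < t₀) (ht : t₀ ≤ t) :
    exp (-(lam * t)) ≤ (lam * t₀)⁻¹ := by
  calc exp (-(lam * t)) ≤ exp (-(lam * t₀)) := by gcongr
    _ = (exp (lam * t₀))⁻¹ := exp_neg _
    _ ≤ (lam * t₀)⁻¹ := by
        gcongr
        linarith [add_one_le_exp (lam * t₀)]

theorem stmt19_general (μ ξ γ L K M₀ : ℝ) (hμ : 0 < μ)
    (A : ℝ → ℝ) (hAbd : ∀ t, 0 ≤ t → 0 ≤ A t ∧ A t ≤ L)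
    (hALip : ∀ s t : ℝ, |A s - A t| ≤ K * |s - t|)
    (M : ℝ → ℝ → ℝ)
    (hM : ∀ ε : ℝ, 0 < ε → ∀ t : ℝ, 0 ≤ t →
      HasDerivAt (M ε) ((ξ * γ * A t - μ * M ε t) / ε) t)
    (hM0 : ∀ ε : ℝ, 0 < ε → M ε 0 = M₀) :
    ∀ t₀ : ℝ, 0 < t₀ → ∀ δ : ℝ, 0 < δ →
      ∃ ε₀ : ℝ, 0 < ε₀ ∧ ∀ ε : ℝ, 0 < ε → ε < ε₀ →
        ∀ t : ℝ, t₀ ≤ t → |M ε t - ξ * γ * A t / μ| < δ := by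
  intro t₀ ht₀ δ hδ
  have hK : 0 ≤ K := (abs_nonneg _).trans (by simpa using hALip 1 0)
  have hL : 0 ≤ L := (hAbd 0 le_rfl).1.trans (hAbd 0 le_rfl).2
  set c := |ξ * γ| / μ
  have hscale (x : ℝ) : |ξ * γ * x / μ| = c * |x| := by
    rw [abs_div, abs_mul, abs_of_pos hμ]; ring
  set C := (|M₀| + c * L) / (μ * t₀) + c * K / μ
  refine ⟨δ / (C + 1), by positivity, fun ε hε hεδ t ht => ?_⟩
  have hrel := abs_sub_le_exp_neg_mul_mul_add_div_of_hasDerivAt (lam := μ / ε) (K := c * K)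
    (B := fun s => ξ * γ * A s / μ) (by positivity) (by positivity) (ht₀.le.trans ht)
    (fun s hs => by
      rw [← sub_div, ← mul_sub, hscale, mul_assoc, ← abs_of_nonneg (sub_nonneg.2 hs.2),
        abs_sub_comm t]
      gcongr
      exact hALip s t)
    (fun s hs => (hM ε hε s hs.1).congr_deriv (by field_simp))
  have hinit : |M ε 0 - ξ * γ * A t / μ| ≤ |M₀| + c * L := by
    rw [hM0 ε hε]
    refine (abs_sub _ _).trans (add_le_add le_rfl ?_)
    rw [hscale, abs_of_nonneg (hAbd t (ht₀.le.trans ht)).1]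
    exact mul_le_mul_of_nonneg_left (hAbd t (ht₀.le.trans ht)).2 (by positivity)
  calc |M ε t - ξ * γ * A t / μ|
      ≤ exp (-(μ / ε * t)) * |M ε 0 - ξ * γ * A t / μ| + c * K / (μ / ε) := hrel
    _ ≤ (μ / ε * t₀)⁻¹ * (|M₀| + c * L) + c * K / (μ / ε) := by
        gcongr
        exact exp_neg_mul_le_inv_mul (by positivity) ht₀ ht
    _ = ε * C := by
        simp only [C]
        field_simp
    _ < δ := by
        rw [lt_div_iff₀ (by positivity)] at hεδ
        nlinarith

theorem stmt19 (μ ξ γ L K M₀ : ℝ) (hμ : 0 < μ) (hξ : 0 < ξ) (hγ : 0 < γ)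
    (A : ℝ → ℝ) (hAbd : ∀ t, 0 ≤ t → 0 ≤ A t ∧ A t ≤ L)
    (hALip : ∀ s t : ℝ, |A s - A t| ≤ K * |s - t|)
    (M : ℝ → ℝ → ℝ)
    (hM : ∀ ε : ℝ, 0 < ε → ∀ t : ℝ, 0 ≤ t →
      HasDerivAt (M ε) ((ξ * γ * A t - μ * M ε t) / ε) t)
    (hM0 : ∀ ε : ℝ, 0 < ε → M ε 0 = M₀) (hM₀ : 0 ≤ M₀) :
    ∀ t₀ : ℝ, 0 < t₀ → ∀ δ : ℝ, 0 < δ →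
      ∃ ε₀ : ℝ, 0 < ε₀ ∧ ∀ ε : ℝ, 0 < ε → ε < ε₀ →
        ∀ t : ℝ, t₀ ≤ t → |M ε t - ξ * γ * A t / μ| < δ :=
  stmt19_general μ ξ γ L K M₀ hμ A hAbd hALip M hM hM0
end
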